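/- arXiv:1802.05906 — 6 statements merged into one kernel-verified Lean document; each statement's English description precedes it below -/
import Mathlib

section
/- Let 1 ≤ k < n. Define B = {(SA[q], SA[q+1]) : 1 ≤ q < n and BWT[q] ≠ BWT[q+1]} (the pairs of text positions associated with the last position of each run of the BWT and the following position). Suppose (x, y) ∈ B satisfies x ≤ SA[k], and x is maximal with this property, i.e., every (x', y') ∈ B with x' ≤ SA[k] has x' ≤ x. Then SA[k+1] = y + SA[k] − x. -/
/-!
This is the LF mapping at work. Let `q` be the run boundary with `SA[q] = x`. If `SA[k] = x`
then `k = q` and the claim is `SA[k+1] = y`. Otherwise, by the maximality of `x`, `k` is not a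
run boundary, so `BWT[k] = BWT[k+1] = c` with `c ≠ $`. Prepending `c` to two adjacent
suffixes gives two suffixes that are again adjacent in the sorted order: a suffix strictly between
them would start with `c`, and its tail would lie strictly between the original two. So
`SA[k] - 1` and `SA[k+1] - 1` are consecutive entries `SA[i]`, `SA[i+1]` of the suffix array,
no run boundary `q'` has `x < SA[q'] ≤ SA[i]`, and induction on `SA[k] - x` finishes the proof.
-/

variable {α : Type*} [LinearOrder α]

/-- The suffix `T[p..n]` of a 1-indexed string `T[1..n]`, as a list. -/
def sfx (T : ℕ → α) (n p : ℕ) : List α :=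
  (List.range (n + 1 - p)).map (fun d => T (p + d))

/-- The Burrows–Wheeler transform determined by the text `T`, its suffix array `SA`,
and the end-of-string character `dollar`:  `BWT[i] = T[SA[i]-1]` if `SA[i] > 1`,
and `BWT[i] = $` if `SA[i] = 1`. -/
def bwt (T : ℕ → α) (SA : ℕ → ℕ) (dollar : α) (i : ℕ) : α :=
  if SA i = 1 then dollar else T (SA i - 1)

lemma List.between_of_cons_between {c d : α} {a b l : List α}
    (h₁ : c :: a < d :: l) (h₂ : d :: l < c :: b) : a < l ∧ l < b := by
  rw [List.cons_lt_cons_iff] at h₁ h₂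
  rcases h₁ with h₁ | ⟨rfl, h₁⟩
  · rcases h₂ with h₂ | ⟨rfl, -⟩
    · exact absurd (h₁.trans h₂) (lt_irrefl _)
    · exact absurd h₁ (lt_irrefl _)
  · rcases h₂ with h₂ | ⟨-, h₂⟩
    · exact absurd h₂ (lt_irrefl _)
    · exact ⟨h₁, h₂⟩

lemma sfx_eq_cons {β : Type*} (T : ℕ → β) {n p : ℕ} (h : p ≤ n) : sfx T n p = T p :: sfx T n (p + 1) := by
  have hlen : n + 1 - p = n + 1 - (p + 1) + 1 := by omega
  rw [sfx, hlen, List.range_succ_eq_map, List.map_cons, List.map_map, sfx]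
  congr 2
  funext d
  simp only [Function.comp_apply]
  congr 1
  omega

lemma sfx_eq_nil {β : Type*} (T : ℕ → β) {n p : ℕ} (h : n < p) : sfx T n p = [] := by
  simp [sfx, show n + 1 - p = 0 by omega]

structure IsSuffixArray (T : ℕ → α) (n : ℕ) (SA : ℕ → ℕ) : Prop where
  mem_Icc : ∀ i, 1 ≤ i → i ≤ n → 1 ≤ SA i ∧ SA i ≤ n
  surj : ∀ p, 1 ≤ p → p ≤ n → ∃ i, 1 ≤ i ∧ i ≤ n ∧ SA i = p
  sfx_lt : ∀ i j, 1 ≤ i → i < j → j ≤ n → sfx T n (SA i) < sfx T n (SA j)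

namespace IsSuffixArray

variable {T : ℕ → α} {n : ℕ} {SA : ℕ → ℕ}

lemma lt_of_sfx_lt (hSA : IsSuffixArray T n SA) {i j : ℕ} (hin : i ≤ n) (hj : 1 ≤ j)
    (h : sfx T n (SA i) < sfx T n (SA j)) : i < j := by
  rcases lt_trichotomy i j with hij | rfl | hji
  · exact hij
  · exact absurd h (List.lt_irrefl _)
  · exact absurd (h.trans (hSA.sfx_lt j i hj hji hin)) (List.lt_irrefl _)

lemma injOn (hSA : IsSuffixArray T n SA) {i j : ℕ} (hi : 1 ≤ i) (hin : i ≤ n)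
    (hj : 1 ≤ j) (hjn : j ≤ n) (h : SA i = SA j) : i = j := by
  rcases lt_trichotomy i j with hij | rfl | hji
  · exact absurd (h ▸ hSA.sfx_lt i j hi hij hjn) (List.lt_irrefl _)
  · rfl
  · exact absurd (h ▸ hSA.sfx_lt j i hj hji hin) (List.lt_irrefl _)

lemma not_sfx_between (hSA : IsSuffixArray T n SA) {k p : ℕ} (hk : 1 ≤ k) (hkn : k < n)
    (hp : 1 ≤ p) (h₁ : sfx T n (SA k) < sfx T n p) : ¬ sfx T n p < sfx T n (SA (k + 1)) := by
  intro h₂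
  by_cases hpn : p ≤ n
  · obtain ⟨m, hm, hmn, rfl⟩ := hSA.surj p hp hpn
    have := hSA.lt_of_sfx_lt hkn.le hm h₁
    have := hSA.lt_of_sfx_lt hmn (by omega) h₂
    omega
  · rw [sfx_eq_nil T (not_le.mp hpn)] at h₁
    exact List.not_lt_nil _ h₁

lemma bwt_eq_dollar_iff (hSA : IsSuffixArray T n SA) {dollar : α}
    (hdollar : ∀ p, 1 ≤ p → p < n → dollar < T p) {i : ℕ} (hi : 1 ≤ i) (hin : i ≤ n) :
    bwt T SA dollar i = dollar ↔ SA i = 1 := by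
  obtain ⟨h₁, h₂⟩ := hSA.mem_Icc i hi hin
  by_cases h : SA i = 1
  · simp [bwt, h]
  · simp only [bwt, h, if_false, iff_false]
    exact (hdollar _ (by omega) (by omega)).ne'

/-- The LF property of the BWT. -/
lemma exists_adjacent_pred_of_bwt_eq (hSA : IsSuffixArray T n SA) {dollar : α}
    (hdollar : ∀ p, 1 ≤ p → p < n → dollar < T p) {k : ℕ} (hk : 1 ≤ k) (hkn : k < n)
    (hbwt : bwt T SA dollar k = bwt T SA dollar (k + 1)) :
    ∃ i, 1 ≤ i ∧ i < n ∧ SA i + 1 = SA k ∧ SA (i + 1) + 1 = SA (k + 1) := by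
  have hne : SA k ≠ SA (k + 1) := fun h => by
    have := hSA.injOn hk hkn.le (by omega) (by omega) h
    omega
  obtain ⟨hk₁, hk₂⟩ := hSA.mem_Icc k hk hkn.le
  obtain ⟨hk'₁, hk'₂⟩ := hSA.mem_Icc (k + 1) (by omega) (by omega)
  have hdk := hSA.bwt_eq_dollar_iff hdollar hk hkn.le
  have hdk' := hSA.bwt_eq_dollar_iff hdollar (i := k + 1) (by omega) (by omega)
  have hpos : SA k ≠ 1 ∧ SA (k + 1) ≠ 1 := by
    rw [hbwt] at hdk
    constructor <;> intro h <;> apply hne <;> simp_all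
  have hc : T (SA k - 1) = T (SA (k + 1) - 1) := by
    simpa only [bwt, hpos.1, hpos.2, if_false] using hbwt
  obtain ⟨i, hi, hin, hSAi⟩ := hSA.surj (SA k - 1) (by omega) (by omega)
  obtain ⟨j, hj, hjn, hSAj⟩ := hSA.surj (SA (k + 1) - 1) (by omega) (by omega)
  have hsi : sfx T n (SA i) = T (SA k - 1) :: sfx T n (SA k) := by
    rw [hSAi, sfx_eq_cons T (by omega), Nat.sub_add_cancel (by omega)]
  have hsj : sfx T n (SA j) = T (SA k - 1) :: sfx T n (SA (k + 1)) := by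
    rw [hSAj, sfx_eq_cons T (by omega), Nat.sub_add_cancel (by omega), hc]
  have hij : i < j := hSA.lt_of_sfx_lt hin hj <| by
    rw [hsi, hsj, List.cons_lt_cons_self]
    exact hSA.sfx_lt k (k + 1) hk (by omega) (by omega)
  -- a suffix strictly between `SA i` and `SA j` would have its tail between `SA k` and `SA (k+1)`
  have hji : j = i + 1 := by
    by_contra hji
    have h₁ := hSA.sfx_lt i (i + 1) hi (by omega) (by omega)
    have h₂ := hSA.sfx_lt (i + 1) j (by omega) (by omega) hjn
    rw [hsi, sfx_eq_cons T (hSA.mem_Icc (i + 1) (by omega) (by omega)).2] at h₁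
    rw [hsj, sfx_eq_cons T (hSA.mem_Icc (i + 1) (by omega) (by omega)).2] at h₂
    obtain ⟨h₁, h₂⟩ := List.between_of_cons_between h₁ h₂
    exact hSA.not_sfx_between hk hkn (by omega) h₁ h₂
  subst hji
  exact ⟨i, hi, by omega, by omega, by omega⟩

lemma apply_succ_eq_add_of_no_boundary (hSA : IsSuffixArray T n SA) {dollar : α}
    (hdollar : ∀ p, 1 ≤ p → p < n → dollar < T p) {q : ℕ} (hq : 1 ≤ q) (hqn : q < n) (d : ℕ) :
    ∀ k, 1 ≤ k → k < n → SA k = SA q + d →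
      (∀ q', 1 ≤ q' → q' < n → bwt T SA dollar q' ≠ bwt T SA dollar (q' + 1) →
        SA q' ≤ SA k → SA q' ≤ SA q) →
      SA (k + 1) = SA (q + 1) + d := by
  induction d with
  | zero =>
    intro k hk hkn hkq _
    rw [hSA.injOn hk hkn.le hq hqn.le hkq]
    rfl
  | succ d ih =>
    intro k hk hkn hkq hmax
    have hbwt_k : bwt T SA dollar k = bwt T SA dollar (k + 1) := by
      by_contra h
      have := hmax k hk hkn h le_rfl
      omega
    obtain ⟨i, hi, hin, hik, hik'⟩ := hSA.exists_adjacent_pred_of_bwt_eq hdollar hk hkn hbwt_k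
    have := ih i hi hin (by omega) fun q' h₁ h₂ h₃ h₄ => hmax q' h₁ h₂ h₃ (by omega)
    omega

end IsSuffixArray

theorem statement0_general
    (n : ℕ) (T : ℕ → α) (dollar : α) (SA : ℕ → ℕ)
    -- `T[1..n]` is a string of length `n ≥ 1` ending with `$`,
    -- which is smaller than every other character and occurs only at position `n`
    (hdollar : ∀ p, 1 ≤ p → p < n → dollar < T p)
    -- `SA` is a permutation of `{1,...,n}` sorting the suffixes lexicographically
    (hSAran : ∀ i, 1 ≤ i → i ≤ n → 1 ≤ SA i ∧ SA i ≤ n)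
    (hSAsurj : ∀ p, 1 ≤ p → p ≤ n → ∃ i, 1 ≤ i ∧ i ≤ n ∧ SA i = p)
    (hSAmono : ∀ i j, 1 ≤ i → i < j → j ≤ n → sfx T n (SA i) < sfx T n (SA j))
    (k : ℕ) (hk1 : 1 ≤ k) (hk2 : k < n)
    (x y : ℕ)
    -- `(x, y) ∈ B`: there is a run boundary `q, q+1` with `x = SA[q]`, `y = SA[q+1]`
    (hxyB : ∃ q, 1 ≤ q ∧ q < n ∧ bwt T SA dollar q ≠ bwt T SA dollar (q + 1) ∧
      x = SA q ∧ y = SA (q + 1))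
    -- `x ≤ SA[k]`
    (hxle : x ≤ SA k)
    -- and `x` is maximal with this property among the first components of `B`
    (hxmax : ∀ q, 1 ≤ q → q < n → bwt T SA dollar q ≠ bwt T SA dollar (q + 1) →
      SA q ≤ SA k → SA q ≤ x) :
    SA (k + 1) = y + SA k - x := by
  obtain ⟨q, hq, hqn, -, rfl, rfl⟩ := hxyB
  have hSA : IsSuffixArray T n SA := ⟨hSAran, hSAsurj, hSAmono⟩
  have := hSA.apply_succ_eq_add_of_no_boundary hdollar hq hqn (SA k - SA q) k hk1 hk2
    (by omega) hxmax
  omega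

/-- If `(x, y)` is the pair of `B` (pairs of SA entries across run
boundaries of the BWT) with `x ≤ SA[k]` and `x` maximal with this property, then
`SA[k+1] = y + SA[k] - x`. -/
theorem statement0
    (n : ℕ) (T : ℕ → α) (dollar : α) (SA : ℕ → ℕ)
    -- `T[1..n]` is a string of length `n ≥ 1` ending with `$`,
    -- which is smaller than every other character and occurs only at position `n`
    (hn : 1 ≤ n) (hTn : T n = dollar)
    (hdollar : ∀ p, 1 ≤ p → p < n → dollar < T p)
    -- `SA` is a permutation of `{1,...,n}` sorting the suffixes lexicographically
    (hSAran : ∀ i, 1 ≤ i → i ≤ n → 1 ≤ SA i ∧ SA i ≤ n)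
    (hSAsurj : ∀ p, 1 ≤ p → p ≤ n → ∃ i, 1 ≤ i ∧ i ≤ n ∧ SA i = p)
    (hSAmono : ∀ i j, 1 ≤ i → i < j → j ≤ n → sfx T n (SA i) < sfx T n (SA j))
    (k : ℕ) (hk1 : 1 ≤ k) (hk2 : k < n)
    (x y : ℕ)
    -- `(x, y) ∈ B`: there is a run boundary `q, q+1` with `x = SA[q]`, `y = SA[q+1]`
    (hxyB : ∃ q, 1 ≤ q ∧ q < n ∧ bwt T SA dollar q ≠ bwt T SA dollar (q + 1) ∧
      x = SA q ∧ y = SA (q + 1))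
    -- `x ≤ SA[k]`
    (hxle : x ≤ SA k)
    -- and `x` is maximal with this property among the first components of `B`
    (hxmax : ∀ q, 1 ≤ q → q < n → bwt T SA dollar q ≠ bwt T SA dollar (q + 1) →
      SA q ≤ SA k → SA q ≤ x) :
    SA (k + 1) = y + SA k - x :=
  statement0_general n T dollar SA hdollar hSAran hSAsurj hSAmono k hk1 hk2 x y hxyB hxle hxmax
end

section
/- Let P be a string whose SA-interval is the nonempty integer interval {j,...,k}, and let c be a character with c ≠ $ that occurs in BWT[j..k]. Let j' be the smallest index in {j,...,k} with BWT[j'] = c. Then: (a) if j' > j then BWT[j'−1] ≠ c, i.e., j' is the first position of a run of the BWT; (b) LF(j') is the smallest element of the SA-interval of the string cP, and SA[LF(j')] = SA[j'] − 1. -/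
variable {α : Type*} [LinearOrder α]

/-!
The LF mapping `i ↦ ISA[SA[i] - 1]` is order preserving on the positions whose BWT characters
agree, because prepending the same character to two suffixes preserves their lexicographic
order. Every occurrence of `cP` is `c` followed by an occurrence of `P`, so it is the LF image
of a position in `[j, k]` carrying `c` in the BWT; that position is at least `j'`, hence the
image is at least `LF(j')`.
-/

/-- The LF mapping; meaningful only where `SA i > 1`, since `SA i - 1` truncates at `0`. -/
def lf (SA ISA : ℕ → ℕ) (i : ℕ) : ℕ := ISA (SA i - 1)

section Strings

variable {β : Type*} {T : ℕ → β} {n : ℕ}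

lemma sfx_cons {p : ℕ} (h : p ≤ n) : sfx T n p = T p :: sfx T n (p + 1) := by
  unfold sfx
  rw [show n + 1 - p = (n - p) + 1 by omega, show n + 1 - (p + 1) = n - p by omega,
    List.range_succ_eq_map, List.map_cons, List.map_map]
  congr 1
  exact List.map_congr_left fun d _ => by simp only [Function.comp_apply]; congr 1; omega

lemma sfx_sub_one {p : ℕ} (h1 : 1 ≤ p) (hp : p ≤ n) :
    sfx T n (p - 1) = T (p - 1) :: sfx T n p := by
  rw [sfx_cons (by omega), Nat.sub_add_cancel h1]

lemma sfx_self : sfx T n n = [T n] := by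
  simp [sfx]

lemma cons_prefix_sfx_iff {c : β} {P : List β} {q : ℕ} (hq : q < n) :
    c :: P <+: sfx T n q ↔ T q = c ∧ P <+: sfx T n (q + 1) := by
  rw [sfx_cons hq.le, List.cons_prefix_cons, eq_comm]

lemma lt_of_cons_prefix_sfx {dollar c : β} {P : List β} {q : ℕ} (hTn : T n = dollar)
    (hc : c ≠ dollar) (hq : q ≤ n) (h : c :: P <+: sfx T n q) : q < n := by
  refine lt_of_le_of_ne hq fun hqn => hc ?_
  rw [hqn, sfx_self, hTn] at h
  exact (List.cons_prefix_cons.mp h).1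

variable {SA : ℕ → ℕ}

lemma bwt_of_ne_one {dollar : β} {i : ℕ} (h : SA i ≠ 1) :
    bwt T SA dollar i = T (SA i - 1) :=
  if_neg h

lemma one_lt_SA_of_bwt_ne {dollar : β} {i : ℕ} (h1 : 1 ≤ SA i)
    (h : bwt T SA dollar i ≠ dollar) : 1 < SA i :=
  lt_of_le_of_ne h1 fun h' => h (if_pos h'.symm)

lemma exists_lf_eq_of_cons_prefix {dollar c : β} {P : List β} {ISA : ℕ → ℕ}
    (hTn : T n = dollar) (hc : c ≠ dollar)
    (hSAran : ∀ i, 1 ≤ i → i ≤ n → 1 ≤ SA i ∧ SA i ≤ n)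
    (hISA : ∀ i, 1 ≤ i → i ≤ n → ISA (SA i) = i)
    (hISAran : ∀ p, 1 ≤ p → p ≤ n → 1 ≤ ISA p ∧ ISA p ≤ n ∧ SA (ISA p) = p)
    {i : ℕ} (hi1 : 1 ≤ i) (hin : i ≤ n) (hiP : c :: P <+: sfx T n (SA i)) :
    ∃ i₁, 1 ≤ i₁ ∧ i₁ ≤ n ∧ P <+: sfx T n (SA i₁) ∧ 1 < SA i₁ ∧
      bwt T SA dollar i₁ = c ∧ lf SA ISA i₁ = i := by
  have hSAi := hSAran i hi1 hin
  have hSAin := lt_of_cons_prefix_sfx hTn hc hSAi.2 hiP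
  obtain ⟨hTSAi, hP⟩ := (cons_prefix_sfx_iff hSAin).mp hiP
  obtain ⟨hi₁1, hi₁n, hSAi₁⟩ := hISAran (SA i + 1) (by omega) (by omega)
  refine ⟨ISA (SA i + 1), hi₁1, hi₁n, by rwa [hSAi₁], by omega, ?_, ?_⟩
  · rw [bwt_of_ne_one (by omega), hSAi₁, Nat.add_sub_cancel, hTSAi]
  · rw [lf, hSAi₁, Nat.add_sub_cancel, hISA i hi1 hin]

end Strings

section SuffixArray

variable {T : ℕ → α} {n : ℕ} {SA ISA : ℕ → ℕ}

lemma le_of_sfx_SA_le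
    (hSAmono : ∀ i j, 1 ≤ i → i < j → j ≤ n → sfx T n (SA i) < sfx T n (SA j))
    {i i' : ℕ} (hi' : 1 ≤ i') (hi : i ≤ n) (h : sfx T n (SA i) ≤ sfx T n (SA i')) : i ≤ i' :=
  le_of_not_gt fun hlt => (hSAmono i' i hi' hlt hi).not_ge h

lemma sfx_SA_le_of_le
    (hSAmono : ∀ i j, 1 ≤ i → i < j → j ≤ n → sfx T n (SA i) < sfx T n (SA j))
    {i i' : ℕ} (hi : 1 ≤ i) (hii' : i ≤ i') (hi' : i' ≤ n) :
    sfx T n (SA i) ≤ sfx T n (SA i') := by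
  rcases hii'.lt_or_eq with hlt | rfl
  · exact (hSAmono i i' hi hlt hi').le
  · exact le_rfl

lemma lf_le_lf_of_bwt_eq {dollar : α}
    (hSAran : ∀ i, 1 ≤ i → i ≤ n → 1 ≤ SA i ∧ SA i ≤ n)
    (hSAmono : ∀ i j, 1 ≤ i → i < j → j ≤ n → sfx T n (SA i) < sfx T n (SA j))
    (hISAran : ∀ p, 1 ≤ p → p ≤ n → 1 ≤ ISA p ∧ ISA p ≤ n ∧ SA (ISA p) = p)
    {i i' : ℕ} (hi : 1 ≤ i) (hii' : i ≤ i') (hi' : i' ≤ n) (hSAi : 1 < SA i)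
    (hSAi' : 1 < SA i') (hbwt : bwt T SA dollar i = bwt T SA dollar i') :
    lf SA ISA i ≤ lf SA ISA i' := by
  rw [bwt_of_ne_one hSAi.ne', bwt_of_ne_one hSAi'.ne'] at hbwt
  have hSAin := (hSAran i hi (hii'.trans hi')).2
  have hSAi'n := (hSAran i' (hi.trans hii') hi').2
  obtain ⟨-, hlfn, hSAlf⟩ := hISAran (SA i - 1) (by omega) (by omega)
  obtain ⟨hlf'1, -, hSAlf'⟩ := hISAran (SA i' - 1) (by omega) (by omega)
  refine le_of_sfx_SA_le hSAmono hlf'1 hlfn ?_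
  unfold lf
  rw [hSAlf, hSAlf', sfx_sub_one hSAi.le hSAin, sfx_sub_one hSAi'.le hSAi'n, hbwt]
  exact List.cons_le_cons _ (sfx_SA_le_of_le hSAmono hi hii' hi')

end SuffixArray

theorem statement3_general
    (n : ℕ) (T : ℕ → α) (dollar : α) (SA : ℕ → ℕ)
    -- `T[1..n]` is a string of length `n ≥ 1` ending with `$`,
    -- which is smaller than every other character and occurs only at position `n`
    (hTn : T n = dollar)
    -- `SA` is a permutation of `{1,...,n}` sorting the suffixes lexicographically
    (hSAran : ∀ i, 1 ≤ i → i ≤ n → 1 ≤ SA i ∧ SA i ≤ n)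
    (hSAmono : ∀ i j, 1 ≤ i → i < j → j ≤ n → sfx T n (SA i) < sfx T n (SA j))
    -- `ISA` is the inverse permutation of `SA`
    (ISA : ℕ → ℕ)
    (hISA : ∀ i, 1 ≤ i → i ≤ n → ISA (SA i) = i)
    (hISAran : ∀ p, 1 ≤ p → p ≤ n → 1 ≤ ISA p ∧ ISA p ≤ n ∧ SA (ISA p) = p)
    (P : List α) (j k : ℕ)
    -- `{j,...,k}` is the SA-interval of `P` (nonempty since `j ≤ k`)
    (hint : ∀ i, (1 ≤ i ∧ i ≤ n ∧ P <+: sfx T n (SA i)) ↔ (j ≤ i ∧ i ≤ k))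
    (c : α) (hc : c ≠ dollar)
    (j' : ℕ) (hj'1 : j ≤ j') (hj'2 : j' ≤ k) (hj'c : bwt T SA dollar j' = c)
    (hj'min : ∀ i, j ≤ i → i ≤ k → bwt T SA dollar i = c → j' ≤ i) :
    -- (a)
    (j < j' → bwt T SA dollar (j' - 1) ≠ c) ∧
    -- (b)
    1 < SA j' ∧
    (1 ≤ ISA (SA j' - 1) ∧ ISA (SA j' - 1) ≤ n ∧
      (c :: P) <+: sfx T n (SA (ISA (SA j' - 1))) ∧
      (∀ i, 1 ≤ i → i ≤ n → (c :: P) <+: sfx T n (SA i) → ISA (SA j' - 1) ≤ i)) ∧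
    SA (ISA (SA j' - 1)) = SA j' - 1 := by
  obtain ⟨hj'1', hj'n, hj'P⟩ := (hint j').mpr ⟨hj'1, hj'2⟩
  have hSAj' := hSAran j' hj'1' hj'n
  have hSAj'1 : 1 < SA j' := one_lt_SA_of_bwt_ne hSAj'.1 (hj'c ▸ hc)
  obtain ⟨hlf1, hlfn, hSAlf⟩ := hISAran (SA j' - 1) (by omega) (by omega)
  refine ⟨fun hlt hbwt => ?_, hSAj'1, ⟨hlf1, hlfn, ?_, ?_⟩, hSAlf⟩
  · have := hj'min (j' - 1) (by omega) (by omega) hbwt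
    omega
  · have hTp : T (SA j' - 1) = c := (bwt_of_ne_one hSAj'1.ne').symm.trans hj'c
    rw [hSAlf, sfx_sub_one hSAj'1.le hSAj'.2, hTp]
    exact List.cons_prefix_cons.mpr ⟨rfl, hj'P⟩
  · intro i hi1 hin hiP
    obtain ⟨i₁, hi₁1, hi₁n, hi₁P, hSAi₁, hbwt, rfl⟩ :=
      exists_lf_eq_of_cons_prefix hTn hc hSAran hISA hISAran hi1 hin hiP
    obtain ⟨hji₁, hi₁k⟩ := (hint i₁).mp ⟨hi₁1, hi₁n, hi₁P⟩
    exact lf_le_lf_of_bwt_eq hSAran hSAmono hISAran hj'1' (hj'min i₁ hji₁ hi₁k hbwt) hi₁n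
      hSAj'1 hSAi₁ (hj'c.trans hbwt.symm)

/-- Let `{j,...,k}` be the nonempty SA-interval of `P`, let `c ≠ $`
occur in `BWT[j..k]`, and let `j'` be the smallest index in `{j,...,k}` with
`BWT[j'] = c`.  Then (a) if `j' > j` then `BWT[j'-1] ≠ c` (so `j'` is the first
position of a run), and (b) `LF(j') = ISA[SA[j']-1]` is the smallest element of the
SA-interval of `cP`, with `SA[LF(j')] = SA[j'] - 1`. -/
theorem statement3
    (n : ℕ) (T : ℕ → α) (dollar : α) (SA : ℕ → ℕ)
    -- `T[1..n]` is a string of length `n ≥ 1` ending with `$`,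
    -- which is smaller than every other character and occurs only at position `n`
    (hn : 1 ≤ n) (hTn : T n = dollar)
    (hdollar : ∀ p, 1 ≤ p → p < n → dollar < T p)
    -- `SA` is a permutation of `{1,...,n}` sorting the suffixes lexicographically
    (hSAran : ∀ i, 1 ≤ i → i ≤ n → 1 ≤ SA i ∧ SA i ≤ n)
    (hSAsurj : ∀ p, 1 ≤ p → p ≤ n → ∃ i, 1 ≤ i ∧ i ≤ n ∧ SA i = p)
    (hSAmono : ∀ i j, 1 ≤ i → i < j → j ≤ n → sfx T n (SA i) < sfx T n (SA j))
    -- `ISA` is the inverse permutation of `SA`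
    (ISA : ℕ → ℕ)
    (hISA : ∀ i, 1 ≤ i → i ≤ n → ISA (SA i) = i)
    (hISAran : ∀ p, 1 ≤ p → p ≤ n → 1 ≤ ISA p ∧ ISA p ≤ n ∧ SA (ISA p) = p)
    (P : List α) (j k : ℕ) (hjk : j ≤ k)
    -- `{j,...,k}` is the SA-interval of `P` (nonempty since `j ≤ k`)
    (hint : ∀ i, (1 ≤ i ∧ i ≤ n ∧ P <+: sfx T n (SA i)) ↔ (j ≤ i ∧ i ≤ k))
    (c : α) (hc : c ≠ dollar)
    (j' : ℕ) (hj'1 : j ≤ j') (hj'2 : j' ≤ k) (hj'c : bwt T SA dollar j' = c)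
    (hj'min : ∀ i, j ≤ i → i ≤ k → bwt T SA dollar i = c → j' ≤ i) :
    -- (a)
    (j < j' → bwt T SA dollar (j' - 1) ≠ c) ∧
    -- (b)
    1 < SA j' ∧
    (1 ≤ ISA (SA j' - 1) ∧ ISA (SA j' - 1) ≤ n ∧
      (c :: P) <+: sfx T n (SA (ISA (SA j' - 1))) ∧
      (∀ i, 1 ≤ i → i ≤ n → (c :: P) <+: sfx T n (SA i) → ISA (SA j' - 1) ≤ i)) ∧
    SA (ISA (SA j' - 1)) = SA j' - 1 :=
  statement3_general n T dollar SA hTn hSAran hSAmono ISA hISA hISAran P j k hint c hc j' hj'1 hj'2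
    hj'c hj'min
end

section
/- Let 1 ≤ h < j ≤ n. Then there exists a threshold i with h ≤ i < j such that: for every i' with h < i' ≤ i, lcp(T[SA[i']..n], T[SA[h]..n]) ≥ lcp(T[SA[i']..n], T[SA[j]..n]); and for every i' with i < i' < j, lcp(T[SA[i']..n], T[SA[j]..n]) ≥ lcp(T[SA[i']..n], T[SA[h]..n]). -/
/-! The suffixes `T[SA[i']..n]` are sorted, and sorted strings `u ≤ v ≤ w` satisfy
`lcp u w ≤ min (lcp u v) (lcp v w)`. Hence, as `i'` runs from `h` to `j`, the lcp with the
`h`-th suffix decreases and the lcp with the `j`-th suffix increases, so the indices where the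
former dominates form an initial segment of `(h, j)`; its last element is the threshold. -/

variable {α : Type*} [LinearOrder α]

/-- Length of the longest common prefix of two lists. -/
def lcp [DecidableEq β] : List β → List β → ℕ
  | a :: u, b :: v => if a = b then lcp u v + 1 else 0
  | _, _ => 0

section LongestCommonPrefix

variable {β : Type*}

theorem lcp_comm [DecidableEq β] : ∀ u v : List β, lcp u v = lcp v u
  | a :: u, b :: v => by
    by_cases hab : a = b
    · subst hab
      simp [lcp, lcp_comm u v]
    · simp [lcp, hab, Ne.symm hab]
  | [], [] | [], _ :: _ | _ :: _, [] => rfl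

theorem List.lt_or_eq_and_le_of_cons_le_cons [LinearOrder β] {a b : β} {u v : List β}
    (h : a :: u ≤ b :: v) : a < b ∨ a = b ∧ u ≤ v := by
  rcases h.lt_or_eq with h | h
  · rcases List.cons_lt_cons_iff.1 h with hab | ⟨rfl, huv⟩
    exacts [.inl hab, .inr ⟨rfl, huv.le⟩]
  · obtain ⟨rfl, rfl⟩ := List.cons_eq_cons.1 h
    exact .inr ⟨rfl, le_rfl⟩

theorem lcp_le_min_of_le_of_le [LinearOrder β] :
    ∀ {u v w : List β}, u ≤ v → v ≤ w → lcp u w ≤ min (lcp u v) (lcp v w)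
  | a :: u, b :: v, c :: w, huv, hvw => by
    rcases List.lt_or_eq_and_le_of_cons_le_cons huv with hab | ⟨rfl, huv'⟩
    · have hbc : b ≤ c := by
        rcases List.lt_or_eq_and_le_of_cons_le_cons hvw with hbc | ⟨rfl, -⟩
        exacts [hbc.le, le_rfl]
      simp [lcp, (hab.trans_le hbc).ne]
    rcases List.lt_or_eq_and_le_of_cons_le_cons hvw with hbc | ⟨rfl, hvw'⟩
    · simp [lcp, hbc.ne]
    · simpa [lcp] using lcp_le_min_of_le_of_le huv' hvw'
  | [], _, _, _, _ => by simp [lcp]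
  | _ :: _, _, [], _, _ => by simp [lcp]
  | _ :: _, [], _ :: _, huv, _ => absurd huv (by simp)

variable [LinearOrder β] {s : ℕ → List β} {h j : ℕ}

theorem MonotoneOn.antitoneOn_lcp_first (hs : MonotoneOn s (Set.Icc h j)) :
    AntitoneOn (fun i => lcp (s i) (s h)) (Set.Icc h j) := by
  intro a ha b hb hab
  have hhj : h ∈ Set.Icc h j := ⟨le_rfl, ha.1.trans ha.2⟩
  simpa only [lcp_comm _ (s h)] using
    (lcp_le_min_of_le_of_le (hs hhj ha ha.1) (hs ha hb hab)).trans (min_le_left _ _)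

theorem MonotoneOn.monotoneOn_lcp_last (hs : MonotoneOn s (Set.Icc h j)) :
    MonotoneOn (fun i => lcp (s i) (s j)) (Set.Icc h j) := by
  intro a ha b hb hab
  have hjj : j ∈ Set.Icc h j := ⟨ha.1.trans ha.2, le_rfl⟩
  exact (lcp_le_min_of_le_of_le (hs ha hb hab) (hs hb hjj hb.2)).trans (min_le_right _ _)

end LongestCommonPrefix

theorem exists_threshold_of_antitoneOn_of_monotoneOn {γ : Type*} [LinearOrder γ] {f g : ℕ → γ}
    {h j : ℕ} (hhj : h < j) (hf : AntitoneOn f (Set.Ioo h j)) (hg : MonotoneOn g (Set.Ioo h j)) :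
    ∃ i, h ≤ i ∧ i < j ∧ (∀ i', h < i' → i' ≤ i → g i' ≤ f i') ∧
      (∀ i', i < i' → i' < j → f i' ≤ g i') := by
  classical
  let P : ℕ → Prop := fun i => h ≤ i ∧ ∀ k, h < k → k ≤ i → g k ≤ f k
  have hPh : P h := ⟨le_rfl, fun k hhk hkh => absurd hkh hhk.not_ge⟩
  obtain ⟨hhi, hi⟩ : P (Nat.findGreatest P (j - 1)) := Nat.findGreatest_spec (by omega) hPh
  refine ⟨_, hhi, ?_, hi, fun i' hii' hi'j => ?_⟩
  · have := Nat.findGreatest_le (P := P) (j - 1)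
    omega
  have hhi' : h < i' := hhi.trans_lt hii'
  obtain ⟨k, hhk, hki', hfg⟩ : ∃ k, h < k ∧ k ≤ i' ∧ f k < g k := by
    simpa [P, hhi'.le] using Nat.findGreatest_is_greatest hii' (by omega)
  calc f i' ≤ f k := hf ⟨hhk, hki'.trans_lt hi'j⟩ ⟨hhi', hi'j⟩ hki'
    _ ≤ g k := hfg.le
    _ ≤ g i' := hg ⟨hhk, hki'.trans_lt hi'j⟩ ⟨hhi', hi'j⟩ hki'

theorem statement6_general
    (n : ℕ) (T : ℕ → α) (SA : ℕ → ℕ)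
    -- `SA` is a permutation of `{1,...,n}` sorting the suffixes lexicographically
    (hSAmono : ∀ i j, 1 ≤ i → i < j → j ≤ n → sfx T n (SA i) < sfx T n (SA j))
    (h j : ℕ) (hh : 1 ≤ h) (hhj : h < j) (hj : j ≤ n) :
    ∃ i, h ≤ i ∧ i < j ∧
      (∀ i', h < i' → i' ≤ i →
        lcp (sfx T n (SA i')) (sfx T n (SA j)) ≤ lcp (sfx T n (SA i')) (sfx T n (SA h))) ∧
      (∀ i', i < i' → i' < j →
        lcp (sfx T n (SA i')) (sfx T n (SA h)) ≤ lcp (sfx T n (SA i')) (sfx T n (SA j))) := by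
  have hsorted : MonotoneOn (fun i => sfx T n (SA i)) (Set.Icc h j) := by
    intro a ha b hb hab
    rcases hab.eq_or_lt with rfl | hlt
    · exact le_rfl
    · exact (hSAmono a b (hh.trans ha.1) hlt (hb.2.trans hj)).le
  exact exists_threshold_of_antitoneOn_of_monotoneOn hhj
    (hsorted.antitoneOn_lcp_first.mono Set.Ioo_subset_Icc_self)
    (hsorted.monotoneOn_lcp_last.mono Set.Ioo_subset_Icc_self)

/-- For `1 ≤ h < j ≤ n` there is a threshold `h ≤ i < j` such that
lexicographically, positions up to `i` have LCP with `T[SA[h]..n]` at least their LCP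
with `T[SA[j]..n]`, and positions after `i` the other way around. -/
theorem statement6
    (n : ℕ) (T : ℕ → α) (dollar : α) (SA : ℕ → ℕ)
    -- `T[1..n]` is a string of length `n ≥ 1` ending with `$`,
    -- which is smaller than every other character and occurs only at position `n`
    (hn : 1 ≤ n) (hTn : T n = dollar)
    (hdollar : ∀ p, 1 ≤ p → p < n → dollar < T p)
    -- `SA` is a permutation of `{1,...,n}` sorting the suffixes lexicographically
    (hSAran : ∀ i, 1 ≤ i → i ≤ n → 1 ≤ SA i ∧ SA i ≤ n)
    (hSAsurj : ∀ p, 1 ≤ p → p ≤ n → ∃ i, 1 ≤ i ∧ i ≤ n ∧ SA i = p)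
    (hSAmono : ∀ i j, 1 ≤ i → i < j → j ≤ n → sfx T n (SA i) < sfx T n (SA j))
    (h j : ℕ) (hh : 1 ≤ h) (hhj : h < j) (hj : j ≤ n) :
    ∃ i, h ≤ i ∧ i < j ∧
      (∀ i', h < i' → i' ≤ i →
        lcp (sfx T n (SA i')) (sfx T n (SA j)) ≤ lcp (sfx T n (SA i')) (sfx T n (SA h))) ∧
      (∀ i', i < i' → i' < j →
        lcp (sfx T n (SA i')) (sfx T n (SA h)) ≤ lcp (sfx T n (SA i')) (sfx T n (SA j))) :=
  statement6_general n T SA hSAmono h j hh hhj hj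
end

section
/- Let P be a nonempty string. Then the number of positions p ∈ {1,...,n} with p + |P| − 1 ≤ n and T[p..p+|P|−1] = P (the number of occurrences of P in T) equals the cardinality of the SA-interval of P, and the set of occurrence positions equals {SA[i] : i is in the SA-interval of P}. -/
variable {α : Type*} [LinearOrder α]

/-! An occurrence of `P` at `p` is the same as `P` being a prefix of the suffix `T[p..n]`.
Since `SA` permutes `{1,...,n}`, the occurrence positions are therefore the image of the
SA-interval of `P` under `SA`, and this image has the size of the interval because `SA` is
injective: distinct ranks carry strictly ordered, hence distinct, suffixes. -/

theorem List.prefix_map_range_iff {β : Type*} (f : ℕ → β) (m : ℕ) (P : List β) :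
    P <+: (List.range m).map f ↔ P.length ≤ m ∧ (List.range P.length).map f = P := by
  rw [List.prefix_iff_eq_take, ← List.map_take, List.take_range]
  constructor
  · intro h
    have hlen : P.length ≤ m := by
      have := congrArg List.length h
      simp only [List.length_map, List.length_range] at this
      omega
    rw [min_eq_left hlen] at h
    exact ⟨hlen, h.symm⟩
  · rintro ⟨hlen, hP⟩
    rw [min_eq_left hlen, hP]

theorem prefix_sfx_iff {β : Type*} {T : ℕ → β} {n p : ℕ} (hp : p ≤ n + 1) (P : List β) :
    P <+: sfx T n p ↔
      p + P.length - 1 ≤ n ∧ (List.range P.length).map (fun d => T (p + d)) = P := by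
  rw [sfx, List.prefix_map_range_iff]
  exact Iff.and (by omega) Iff.rfl

theorem statement14_general
    (n : ℕ) (T : ℕ → α) (SA : ℕ → ℕ)
    -- `SA` is a permutation of `{1,...,n}` sorting the suffixes lexicographically
    (hSAran : ∀ i, 1 ≤ i → i ≤ n → 1 ≤ SA i ∧ SA i ≤ n)
    (hSAsurj : ∀ p, 1 ≤ p → p ≤ n → ∃ i, 1 ≤ i ∧ i ≤ n ∧ SA i = p)
    (hSAmono : ∀ i j, 1 ≤ i → i < j → j ≤ n → sfx T n (SA i) < sfx T n (SA j))
    (P : List α) :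
    ((Finset.Icc 1 n).filter
        (fun p => p + P.length - 1 ≤ n ∧
          (List.range P.length).map (fun d => T (p + d)) = P)).card =
      ((Finset.Icc 1 n).filter (fun i => P <+: sfx T n (SA i))).card ∧
    ((Finset.Icc 1 n).filter (fun i => P <+: sfx T n (SA i))).image SA =
      (Finset.Icc 1 n).filter
        (fun p => p + P.length - 1 ≤ n ∧
          (List.range P.length).map (fun d => T (p + d)) = P) := by
  have hrange : (Finset.Icc 1 n).image SA = Finset.Icc 1 n := by
    refine Finset.image_eq_iff_surjOn_mapsTo.mpr ⟨fun p hp => ?_, fun i hi => ?_⟩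
    · simp only [Finset.coe_Icc, Set.mem_Icc, Set.mem_image] at hp ⊢
      obtain ⟨i, hi1, hi2, rfl⟩ := hSAsurj p hp.1 hp.2
      exact ⟨i, ⟨hi1, hi2⟩, rfl⟩
    · simp only [Finset.coe_Icc, Set.mem_Icc] at hi ⊢
      exact hSAran i hi.1 hi.2
  have himage : ((Finset.Icc 1 n).filter (fun i => P <+: sfx T n (SA i))).image SA =
      (Finset.Icc 1 n).filter
        (fun p => p + P.length - 1 ≤ n ∧
          (List.range P.length).map (fun d => T (p + d)) = P) := by
    rw [← Finset.filter_image (p := fun p => P <+: sfx T n p), hrange]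
    exact Finset.filter_congr fun p hp => prefix_sfx_iff (by linarith [(Finset.mem_Icc.mp hp).2]) P
  have hinj : Set.InjOn SA (Finset.Icc 1 n) :=
    (StrictMonoOn.injOn (f := sfx T n ∘ SA) fun i hi j hj hij =>
      hSAmono i j (Finset.mem_Icc.mp hi).1 hij (Finset.mem_Icc.mp hj).2).of_comp
  refine ⟨?_, himage⟩
  rw [← himage, Finset.card_image_of_injOn
    (hinj.mono (Finset.coe_subset.mpr (Finset.filter_subset ..)))]

/-- For a nonempty pattern `P`, the number of occurrences of `P`
in `T` (positions `p ∈ {1,...,n}` with `p + |P| - 1 ≤ n` and `T[p..p+|P|-1] = P`)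
equals the cardinality of the SA-interval of `P`, and the set of occurrence positions
is the image under `SA` of the SA-interval. -/
theorem statement14
    (n : ℕ) (T : ℕ → α) (dollar : α) (SA : ℕ → ℕ)
    -- `T[1..n]` is a string of length `n ≥ 1` ending with `$`,
    -- which is smaller than every other character and occurs only at position `n`
    (hn : 1 ≤ n) (hTn : T n = dollar)
    (hdollar : ∀ p, 1 ≤ p → p < n → dollar < T p)
    -- `SA` is a permutation of `{1,...,n}` sorting the suffixes lexicographically
    (hSAran : ∀ i, 1 ≤ i → i ≤ n → 1 ≤ SA i ∧ SA i ≤ n)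
    (hSAsurj : ∀ p, 1 ≤ p → p ≤ n → ∃ i, 1 ≤ i ∧ i ≤ n ∧ SA i = p)
    (hSAmono : ∀ i j, 1 ≤ i → i < j → j ≤ n → sfx T n (SA i) < sfx T n (SA j))
    (P : List α) (hP : P ≠ []) :
    ((Finset.Icc 1 n).filter
        (fun p => p + P.length - 1 ≤ n ∧
          (List.range P.length).map (fun d => T (p + d)) = P)).card =
      ((Finset.Icc 1 n).filter (fun i => P <+: sfx T n (SA i))).card ∧
    ((Finset.Icc 1 n).filter (fun i => P <+: sfx T n (SA i))).image SA =
      (Finset.Icc 1 n).filter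
        (fun p => p + P.length - 1 ≤ n ∧
          (List.range P.length).map (fun d => T (p + d)) = P) :=
  statement14_general n T SA hSAran hSAsurj hSAmono P
end

section
/- Let S[1..m] and T[1..n] be strings and let 1 < i ≤ m. Then ℓ_{i−1} ≤ ℓ_i + 1, and ℓ_{i−1} = ℓ_i + 1 holds if and only if the substring S[i−1..i+ℓ_i−1] of S (of length ℓ_i + 1) occurs in T. Consequently, the substring S[i..i+ℓ_i−1] is left-maximal among substrings of S occurring in T exactly when ℓ_{i−1} ≠ ℓ_i + 1. -/
universe u

/-- The bound `l ≤ w.length` matters: `w.take l = w` for every longer `l`. -/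
def IsMatchLength {α : Type u} (T w : List α) (ℓ : ℕ) : Prop :=
  ℓ ≤ w.length ∧ w.take ℓ <:+: T ∧ ∀ l ≤ w.length, w.take l <:+: T → l ≤ ℓ

namespace IsMatchLength

variable {α : Type u} {T w : List α} {a b : ℕ}

theorem le_succ_of_tail (ha : IsMatchLength T w a) (hb : IsMatchLength T w.tail b) :
    a ≤ b + 1 := by
  obtain ⟨ha_len, ha_occ, -⟩ := ha
  have htail : w.tail.take (a - 1) <:+: T := by
    rw [← List.tail_take_eq_take_tail]
    exact (List.tail_suffix _).isInfix.trans ha_occ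
  have := hb.2.2 (a - 1) (List.length_tail ▸ by omega) htail
  omega

theorem eq_succ_iff_of_tail (hw : w ≠ []) (ha : IsMatchLength T w a)
    (hb : IsMatchLength T w.tail b) : a = b + 1 ↔ w.take (b + 1) <:+: T := by
  refine ⟨fun h => h ▸ ha.2.1, fun hocc => le_antisymm (ha.le_succ_of_tail hb) ?_⟩
  have hb_len : b ≤ w.length - 1 := List.length_tail ▸ hb.1
  have hw_len : 0 < w.length := List.length_pos_of_ne_nil hw
  exact ha.2.2 (b + 1) (by omega) hocc

end IsMatchLength

theorem isMatchLength_drop {α : Type u} {S T : List α} {ℓ : ℕ → ℕ}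
    (hms : ∀ i, 1 ≤ i → i ≤ S.length →
      i + ℓ i - 1 ≤ S.length ∧ ((S.drop (i - 1)).take (ℓ i)) <:+: T ∧
        ∀ l, i + l - 1 ≤ S.length → ((S.drop (i - 1)).take l) <:+: T → l ≤ ℓ i)
    {i : ℕ} (hi1 : 1 ≤ i) (hi2 : i ≤ S.length) :
    IsMatchLength T (S.drop (i - 1)) (ℓ i) := by
  obtain ⟨hlen, hocc, hmax⟩ := hms i hi1 hi2
  refine ⟨by rw [List.length_drop]; omega, hocc, fun l hl => hmax l ?_⟩
  rw [List.length_drop] at hl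
  omega

variable {α : Type*} [LinearOrder α]

/-- For `1 < i ≤ m`: `ℓ_{i-1} ≤ ℓ_i + 1`, with equality iff the
substring `S[i-1..i+ℓ_i-1]` (of length `ℓ_i + 1`) occurs in `T`.  Consequently
`S[i..i+ℓ_i-1]` is left-maximal among substrings of `S` occurring in `T` exactly when
`ℓ_{i-1} ≠ ℓ_i + 1`. -/
theorem statement16
    (S T : List α) (ℓ : ℕ → ℕ)
    -- `ℓ i` is the matching-statistics length of `S[1..m]` at position `i` w.r.t. `T`:
    -- the largest `l ≥ 0` such that the substring `S[i..i+l-1]` of `S`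
    -- (i.e. `(S.drop (i-1)).take l`) occurs as a contiguous substring of `T`
    (hms : ∀ i, 1 ≤ i → i ≤ S.length →
      i + ℓ i - 1 ≤ S.length ∧ ((S.drop (i - 1)).take (ℓ i)) <:+: T ∧
        ∀ l, i + l - 1 ≤ S.length → ((S.drop (i - 1)).take l) <:+: T → l ≤ ℓ i)
    (i : ℕ) (hi1 : 1 < i) (hi2 : i ≤ S.length) :
    ℓ (i - 1) ≤ ℓ i + 1 ∧
    (ℓ (i - 1) = ℓ i + 1 ↔ ((S.drop (i - 2)).take (ℓ i + 1)) <:+: T) ∧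
    (¬ ((S.drop (i - 2)).take (ℓ i + 1)) <:+: T ↔ ℓ (i - 1) ≠ ℓ i + 1) := by
  have hprev : IsMatchLength T (S.drop (i - 2)) (ℓ (i - 1)) := by
    simpa only [show i - 1 - 1 = i - 2 by omega] using
      isMatchLength_drop hms (i := i - 1) (by omega) (by omega)
  have hcur : IsMatchLength T (S.drop (i - 2)).tail (ℓ i) := by
    simpa only [List.tail_drop, show i - 2 + 1 = i - 1 by omega] using
      isMatchLength_drop hms (by omega) hi2
  have hne : S.drop (i - 2) ≠ [] := by
    rw [← List.length_pos_iff, List.length_drop]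
    omega
  have heq := hprev.eq_succ_iff_of_tail hne hcur
  exact ⟨hprev.le_succ_of_tail hcur, heq, (not_congr heq).symm⟩
end

section
/- Let S[1..m] and T[1..n] be strings such that every character occurring in S also occurs in T, and let 1 ≤ a < b ≤ m. Then the substring S[a..b] is a minimal non-matching substring — i.e., S[a..b] does not occur in T but every proper substring of S[a..b] occurs in T — if and only if ℓ_a = b − a and ℓ_{a+1} ≥ b − a. -/
variable {α : Type*} [LinearOrder α]

/-!
A proper substring of `S[a..b]` lies inside `S[a..b-1]` or inside `S[a+1..b]`, so `S[a..b]`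
is a minimal non-matching substring exactly when `S[a..b]` does not occur in `T` while
`S[a..b-1]` and `S[a+1..b]` do. The prefixes of `S[i..m]` occurring in `T` are exactly those
of length at most `ℓ_i`, so these three conditions read `b - a + 1 > ℓ_a`, `b - a ≤ ℓ_a` and
`b - a ≤ ℓ_{a+1}`.
-/

section

variable {β : Type*}

namespace List

theorem take_drop_infix_take_drop {l : List β} {i i' k k' : ℕ} (hi : i ≤ i')
    (hk : i' + k' ≤ i + k) : (l.drop i').take k' <:+: (l.drop i).take k := by
  set x := l.drop i
  have hwindow : (l.drop i').take k' = ((x.take k).drop (i' - i)).take k' := by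
    rw [drop_take, take_take, drop_drop, Nat.add_sub_cancel' hi, min_eq_left (by omega)]
  rw [hwindow]
  exact (take_prefix _ _).isInfix.trans (drop_suffix _ _).isInfix

theorem take_infix_iff_le_of_maximal {x y : List β} {L : ℕ} (hL : x.take L <:+: y)
    (hmax : ∀ l ≤ x.length, x.take l <:+: y → l ≤ L) {l : ℕ} (hl : l ≤ x.length) :
    x.take l <:+: y ↔ l ≤ L :=
  ⟨hmax l hl, fun h => (take_prefix_take_left h).isInfix.trans hL⟩

end List

theorem forall_proper_substring_infix_iff {S T : List β} {a b : ℕ} (ha : 1 ≤ a)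
    (hab : a < b) :
    (∀ a' b', a ≤ a' → a' ≤ b' → b' ≤ b → (a', b') ≠ (a, b) →
        (S.drop (a' - 1)).take (b' - a' + 1) <:+: T) ↔
      (S.drop (a - 1)).take (b - a) <:+: T ∧ (S.drop a).take (b - a) <:+: T := by
  constructor
  · intro hall
    have hleft := hall a (b - 1) le_rfl (by omega) (by omega)
      (by simp only [ne_eq, Prod.mk.injEq]; omega)
    have hright := hall (a + 1) b (by omega) (by omega) le_rfl (by simp)
    rw [show b - 1 - a + 1 = b - a by omega] at hleft
    rw [show b - (a + 1) + 1 = b - a by omega, Nat.add_sub_cancel] at hright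
    exact ⟨hleft, hright⟩
  · rintro ⟨hleft, hright⟩ a' b' ha' hab' hb' hne
    obtain rfl | ha'_gt := eq_or_lt_of_le ha'
    · have hb'_lt : b' < b := lt_of_le_of_ne hb' (by rintro rfl; exact hne rfl)
      exact (List.take_drop_infix_take_drop le_rfl (by omega)).trans hleft
    · exact (List.take_drop_infix_take_drop (by omega) (by omega)).trans hright

end

theorem statement17_general
    (S T : List α) (ℓ : ℕ → ℕ)
    -- `ℓ i` is the matching-statistics length of `S[1..m]` at position `i` w.r.t. `T`:
    -- the largest `l ≥ 0` such that the substring `S[i..i+l-1]` of `S`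
    -- (i.e. `(S.drop (i-1)).take l`) occurs as a contiguous substring of `T`
    (hms : ∀ i, 1 ≤ i → i ≤ S.length →
      i + ℓ i - 1 ≤ S.length ∧ ((S.drop (i - 1)).take (ℓ i)) <:+: T ∧
        ∀ l, i + l - 1 ≤ S.length → ((S.drop (i - 1)).take l) <:+: T → l ≤ ℓ i)
    (a b : ℕ) (ha : 1 ≤ a) (hab : a < b) (hb : b ≤ S.length) :
    (¬ ((S.drop (a - 1)).take (b - a + 1)) <:+: T ∧
      ∀ a' b', a ≤ a' → a' ≤ b' → b' ≤ b → (a', b') ≠ (a, b) →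
        ((S.drop (a' - 1)).take (b' - a' + 1)) <:+: T)
    ↔ (ℓ a = b - a ∧ b - a ≤ ℓ (a + 1)) := by
  have hℓ : ∀ i, 1 ≤ i → i ≤ S.length → ∀ l, i + l - 1 ≤ S.length →
      ((S.drop (i - 1)).take l <:+: T ↔ l ≤ ℓ i) := by
    intro i hi hiS l hl
    obtain ⟨-, hocc, hmax⟩ := hms i hi hiS
    exact List.take_infix_iff_le_of_maximal hocc
      (fun l' hl' => hmax l' (by rw [List.length_drop] at hl'; omega))
      (by rw [List.length_drop]; omega)
  have hℓ_succ := hℓ (a + 1) (by omega) (by omega) (b - a) (by omega)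
  rw [Nat.add_sub_cancel] at hℓ_succ
  rw [forall_proper_substring_infix_iff ha hab, hℓ a ha (by omega) _ (by omega),
    hℓ a ha (by omega) _ (by omega), hℓ_succ]
  omega

/-- If every character of `S` occurs in `T`, then for
`1 ≤ a < b ≤ m`, the substring `S[a..b]` is a minimal non-matching substring (it does
not occur in `T` but every proper substring of it does) if and only if
`ℓ_a = b - a` and `ℓ_{a+1} ≥ b - a`. -/
theorem statement17
    (S T : List α) (ℓ : ℕ → ℕ)
    -- `ℓ i` is the matching-statistics length of `S[1..m]` at position `i` w.r.t. `T`: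
    -- the largest `l ≥ 0` such that the substring `S[i..i+l-1]` of `S`
    -- (i.e. `(S.drop (i-1)).take l`) occurs as a contiguous substring of `T`
    (hms : ∀ i, 1 ≤ i → i ≤ S.length →
      i + ℓ i - 1 ≤ S.length ∧ ((S.drop (i - 1)).take (ℓ i)) <:+: T ∧
        ∀ l, i + l - 1 ≤ S.length → ((S.drop (i - 1)).take l) <:+: T → l ≤ ℓ i)
    (hchar : ∀ x ∈ S, x ∈ T)
    (a b : ℕ) (ha : 1 ≤ a) (hab : a < b) (hb : b ≤ S.length) :
    (¬ ((S.drop (a - 1)).take (b - a + 1)) <:+: T ∧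
      ∀ a' b', a ≤ a' → a' ≤ b' → b' ≤ b → (a', b') ≠ (a, b) →
        ((S.drop (a' - 1)).take (b' - a' + 1)) <:+: T)
    ↔ (ℓ a = b - a ∧ b - a ≤ ℓ (a + 1)) :=
  statement17_general S T ℓ hms a b ha hab hb
end
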